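/- arXiv:2307.12662 — 2 statements merged into one kernel-verified Lean document; each statement's English description precedes it below -/
import Mathlib

section
/- Let θ : H₁ → H₂ be a bounded operator between Hilbert spaces such that θ*θ − 1 is compact and θ*θ is invertible. Let U = θ(θ*θ)^{-1/2} be the partial isometry from the polar decomposition. Then θ − U is a compact operator. -/
/-!
Write `s = (θ*θ)^{1/2}`, a positive invertible operator with `θ = U s`, so `θ - U = U (s - 1)`.
Since `1 + s ≥ 1` is invertible and `(1 + s)(s - 1) = s² - 1 = θ*θ - 1`, the operator
`s - 1 = (1 + s)⁻¹ (θ*θ - 1)` is compact, hence so is `U (s - 1)`.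
-/

open ContinuousLinearMap

namespace CFC

variable {A : Type*} [CStarAlgebra A] [PartialOrder A] [StarOrderedRing A]

lemma isUnit_one_add_sqrt (a : A) : IsUnit (1 + sqrt a) :=
  (isStrictlyPositive_one.add_nonneg (sqrt_nonneg a)).isUnit

lemma sqrt_sub_one_eq_inverse_mul {a : A} (ha : 0 ≤ a) :
    sqrt a - 1 = Ring.inverse (1 + sqrt a) * (a - 1) := by
  have hfactor : (1 + sqrt a) * (sqrt a - 1) = a - 1 :=
    calc (1 + sqrt a) * (sqrt a - 1) = sqrt a * sqrt a - 1 := by noncomm_ring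
      _ = a - 1 := by rw [sqrt_mul_sqrt_self a ha]
  rw [← hfactor, Ring.inverse_mul_cancel_left _ _ (isUnit_one_add_sqrt a)]

end CFC

lemma IsCompactOperator.sqrt_sub_one {H : Type*} [NormedAddCommGroup H] [InnerProductSpace ℂ H]
    [CompleteSpace H] {T : H →L[ℂ] H} (hT : 0 ≤ T)
    (h : IsCompactOperator ⇑(T - 1)) : IsCompactOperator ⇑(CFC.sqrt T - 1) := by
  rw [CFC.sqrt_sub_one_eq_inverse_mul hT, mul_def, coe_comp]
  exact h.clm_comp _

theorem stmt7 {H₁ H₂ : Type*} [NormedAddCommGroup H₁] [InnerProductSpace ℂ H₁] [CompleteSpace H₁]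
    [NormedAddCommGroup H₂] [InnerProductSpace ℂ H₂] [CompleteSpace H₂]
    (θ : H₁ →L[ℂ] H₂)
    (hcpt : IsCompactOperator ⇑(adjoint θ ∘L θ - 1))
    (hunit : IsUnit (adjoint θ ∘L θ))
    (U : H₁ →L[ℂ] H₂)
    (hU : U = θ ∘L Ring.inverse (CFC.sqrt (adjoint θ ∘L θ))) :
    IsCompactOperator ⇑(θ - U) := by
  have hpos : 0 ≤ adjoint θ ∘L θ := nonneg_iff_isPositive _ |>.mpr (isPositive_adjoint_comp_self θ)
  set s := CFC.sqrt (adjoint θ ∘L θ)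
  have hs : IsUnit s := (CFC.isUnit_sqrt_iff _ hpos).mpr hunit
  have hθ : θ = U ∘L s := by
    rw [hU, comp_assoc, ← mul_def, Ring.inverse_mul_cancel _ hs, one_def, comp_id]
  have hdiff : θ - U = U ∘L (s - 1) := by
    nth_rw 1 [hθ]
    rw [comp_sub, one_def, comp_id]
  rw [hdiff, coe_comp]
  exact (hcpt.sqrt_sub_one hpos).clm_comp U
end

section
/- Let H be a Hilbert space, x₀ a point of a topological space X, and T : X → 𝓑(H₁, H₂) a continuous map such that T(x₀) is surjective with finite-dimensional kernel. Then there exists an open neighborhood W of x₀ such that for all x ∈ W, T(x) restricted to ker(T(x₀))^⊥ is injective with closed range, T(x) is surjective, and dim ker(T(x)) = dim ker(T(x₀)). -/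
open ContinuousLinearMap Module

/-
Put `K = ker T(x₀)`. Since `K` is closed, `H₁ = K ⊕ Kᗮ`, so `T(x₀)` restricts to a bijection
`Kᗮ → H₂`, i.e. to an isomorphism of Banach spaces. Isomorphisms form an open subset of
`𝓑(Kᗮ, H₂)`, so by continuity `T(x)|_{Kᗮ}` is still an isomorphism for `x` near `x₀`. Then `Kᗮ`
is a complement of `ker T(x)` as well, and two complements of the same subspace are isomorphic
(both to the quotient `H₁ ⧸ Kᗮ`), so `ker T(x) ≅ K`.
-/

namespace Submodule

variable {R M : Type*} [Ring R] [AddCommGroup M] [Module R M]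

theorem finrank_eq_of_isCompl_of_isCompl {q p p' : Submodule R M}
    (h : IsCompl q p) (h' : IsCompl q p') : finrank R p = finrank R p' :=
  ((q.quotientEquivOfIsCompl p h).symm.trans (q.quotientEquivOfIsCompl p' h')).finrank_eq

end Submodule

namespace LinearMap

variable {R M N : Type*} [Ring R] [AddCommGroup M] [Module R M] [AddCommGroup N] [Module R N]

theorem bijective_domRestrict_iff {f : M →ₗ[R] N} (hf : Function.Surjective f)
    {q : Submodule R M} : Function.Bijective (f.domRestrict q) ↔ IsCompl q (ker f) := by
  rw [Function.Bijective, injective_domRestrict_iff, surjective_domRestrict_iff hf, isCompl_iff]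

theorem isCompl_ker_of_bijective_domRestrict {f : M →ₗ[R] N} {q : Submodule R M}
    (h : Function.Bijective (f.domRestrict q)) : IsCompl q (ker f) :=
  (bijective_domRestrict_iff (h.2.of_comp (f := f))).1 h

end LinearMap

theorem ContinuousLinearMap.isOpen_setOf_bijective {𝕜 E F : Type*} [NontriviallyNormedField 𝕜]
    [NormedAddCommGroup E] [NormedSpace 𝕜 E] [CompleteSpace E]
    [NormedAddCommGroup F] [NormedSpace 𝕜 F] [CompleteSpace F] :
    IsOpen {A : E →L[𝕜] F | Function.Bijective A} := by
  convert ContinuousLinearEquiv.isOpen (𝕜 := 𝕜) (E := E) (F := F) using 1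
  ext A
  exact ⟨fun hA => ⟨.ofBijective A (LinearMap.ker_eq_bot.2 hA.1) (LinearMap.range_eq_top.2 hA.2),
    rfl⟩, by rintro ⟨e, rfl⟩; exact e.bijective⟩

theorem stmt18_general {X : Type*} [TopologicalSpace X]
    {H₁ H₂ : Type*} [NormedAddCommGroup H₁] [InnerProductSpace ℂ H₁] [CompleteSpace H₁]
    [NormedAddCommGroup H₂] [InnerProductSpace ℂ H₂] [CompleteSpace H₂]
    (T : X → H₁ →L[ℂ] H₂) (hT : Continuous T) (x₀ : X)
    (hsurj : Function.Surjective (T x₀)) :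
    ∃ W : Set X, IsOpen W ∧ x₀ ∈ W ∧ ∀ x ∈ W,
      Set.InjOn (T x) ((LinearMap.ker (T x₀ : H₁ →ₗ[ℂ] H₂))ᗮ : Set H₁) ∧
      IsClosed (T x '' ((LinearMap.ker (T x₀ : H₁ →ₗ[ℂ] H₂))ᗮ : Set H₁)) ∧
      Function.Surjective (T x) ∧
      finrank ℂ (LinearMap.ker (T x : H₁ →ₗ[ℂ] H₂)) = finrank ℂ (LinearMap.ker (T x₀ : H₁ →ₗ[ℂ] H₂)) := by
  set K := LinearMap.ker (T x₀ : H₁ →ₗ[ℂ] H₂)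
  have hK : IsCompl Kᗮ K := K.isCompl_orthogonal.symm
  refine ⟨(fun x => (T x).comp Kᗮ.subtypeL) ⁻¹' {A | Function.Bijective A},
    isOpen_setOf_bijective.preimage (hT.clm_comp_const _),
    (LinearMap.bijective_domRestrict_iff hsurj).2 hK, fun x hx => ?_⟩
  have hx' : Function.Bijective ((T x : H₁ →ₗ[ℂ] H₂).domRestrict Kᗮ) := hx
  have hKx := LinearMap.isCompl_ker_of_bijective_domRestrict hx'
  refine ⟨LinearMap.disjoint_ker_iff_injOn.1 hKx.disjoint, ?_, hx.2.of_comp (f := T x),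
    Submodule.finrank_eq_of_isCompl_of_isCompl hKx hK⟩
  rw [Set.image_eq_range]
  exact hx.2.range_eq ▸ isClosed_univ

theorem stmt18 {X : Type*} [TopologicalSpace X]
    {H₁ H₂ : Type*} [NormedAddCommGroup H₁] [InnerProductSpace ℂ H₁] [CompleteSpace H₁]
    [NormedAddCommGroup H₂] [InnerProductSpace ℂ H₂] [CompleteSpace H₂]
    (T : X → H₁ →L[ℂ] H₂) (hT : Continuous T) (x₀ : X)
    (hsurj : Function.Surjective (T x₀))
    (hfin : FiniteDimensional ℂ (LinearMap.ker (T x₀ : H₁ →ₗ[ℂ] H₂))) :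
    ∃ W : Set X, IsOpen W ∧ x₀ ∈ W ∧ ∀ x ∈ W,
      Set.InjOn (T x) ((LinearMap.ker (T x₀ : H₁ →ₗ[ℂ] H₂))ᗮ : Set H₁) ∧
      IsClosed (T x '' ((LinearMap.ker (T x₀ : H₁ →ₗ[ℂ] H₂))ᗮ : Set H₁)) ∧
      Function.Surjective (T x) ∧
      finrank ℂ (LinearMap.ker (T x : H₁ →ₗ[ℂ] H₂)) = finrank ℂ (LinearMap.ker (T x₀ : H₁ →ₗ[ℂ] H₂)) :=
  stmt18_general T hT x₀ hsurj
end
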